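/- Homological equation for periodic frequencies: if ω is T-periodic, l(I) = ω·I, f ∈ C^k, [f] its T-average, and χ = (1/T)∫_0^T t (f − [f]) ∘ Φ_t^l dt, then {χ, l} = f − [f]. In particular no small divisors occur. -/

import Mathlib

/-! Along the flow of `l` the function `f` restricts to a continuous `T`-periodic function `g`
of time, and `[f]` is constant equal to the mean `c` of `g`. After the substitution `u = t + s`,
`T χ(Φ_s x) = ∫_s^{s+T} u (g u - c) du - s ∫_s^{s+T} (g u - c) du`, and the second integral
vanishes because `g - c` has zero mean over every period. Differentiating the remaining integral
in `s` gives `(s + T)(g s - c) - s (g s - c) = T (g s - c)`: no division by `k · ω` is needed. -/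

open Metric Set MeasureTheory intervalIntegral

def ThetaPeriodic {n : ℕ} {F : Type*} (f : ((Fin n → ℝ) × (Fin n → ℝ)) → F) : Prop :=
  ∀ x : (Fin n → ℝ) × (Fin n → ℝ), ∀ m : Fin n → ℤ,
    f (x.1 + (fun i => (m i : ℝ)), x.2) = f x

def Dom (n : ℕ) (ρ : ℝ) : Set ((Fin n → ℝ) × (Fin n → ℝ)) :=
  univ ×ˢ ball (0 : Fin n → ℝ) ρ

def IsPeriodicVec {n : ℕ} (ω : Fin n → ℝ) (T : ℝ) : Prop :=
  0 < T ∧ ω ≠ 0 ∧ (∀ i, ∃ z : ℤ, T * ω i = (z : ℝ)) ∧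
    ∀ t : ℝ, 0 < t → (∀ i, ∃ z : ℤ, t * ω i = (z : ℝ)) → T ≤ t

noncomputable def timeAverage {n : ℕ} (ω : Fin n → ℝ) (T : ℝ)
    (f : ((Fin n → ℝ) × (Fin n → ℝ)) → ℝ) : ((Fin n → ℝ) × (Fin n → ℝ)) → ℝ :=
  fun x => (1 / T) * ∫ t in (0 : ℝ)..T, f (x.1 + t • ω, x.2)

noncomputable def averagingGenerator {n : ℕ} (ω : Fin n → ℝ) (T : ℝ)
    (f : ((Fin n → ℝ) × (Fin n → ℝ)) → ℝ) : ((Fin n → ℝ) × (Fin n → ℝ)) → ℝ :=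
  fun x => (1 / T) * ∫ t in (0 : ℝ)..T,
    t * (f (x.1 + t • ω, x.2) - timeAverage ω T f (x.1 + t • ω, x.2))

namespace Function.Periodic

variable {g : ℝ → ℝ} {T : ℝ}

lemma intervalIntegral_comp_add_right_eq (hg : Periodic g T) (s : ℝ) :
    ∫ t in (0 : ℝ)..T, g (t + s) = ∫ t in (0 : ℝ)..T, g t := by
  rw [intervalIntegral.integral_comp_add_right, zero_add, add_comm T s,
    hg.intervalIntegral_add_eq s 0, zero_add]

lemma intervalIntegral_sub_mean_eq_zero (hg : Periodic g T) (hcont : Continuous g) (hT : T ≠ 0)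
    (s : ℝ) : ∫ u in s..s + T, (g u - (1 / T) * ∫ t in (0 : ℝ)..T, g t) = 0 := by
  rw [intervalIntegral.integral_sub (hcont.intervalIntegrable _ _) intervalIntegrable_const,
    hg.intervalIntegral_add_eq s 0, zero_add, intervalIntegral.integral_const, add_sub_cancel_left,
    smul_eq_mul]
  field_simp
  ring

lemma intervalIntegral_mul_comp_add_sub_mean (hg : Periodic g T) (hcont : Continuous g)
    (hT : T ≠ 0) (s : ℝ) :
    let c := (1 / T) * ∫ t in (0 : ℝ)..T, g t
    ∫ t in (0 : ℝ)..T, t * (g (t + s) - c) = ∫ u in s..s + T, u * (g u - c) := by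
  intro c
  have hint : ∀ h : ℝ → ℝ, Continuous h → IntervalIntegrable h volume s (s + T) :=
    fun h hh => hh.intervalIntegrable _ _
  calc ∫ t in (0 : ℝ)..T, t * (g (t + s) - c)
      = ∫ t in (0 : ℝ)..T, ((t + s) * (g (t + s) - c) - s * (g (t + s) - c)) := by
        congr 1 with t
        ring
    _ = ∫ u in s..s + T, (u * (g u - c) - s * (g u - c)) := by
        rw [intervalIntegral.integral_comp_add_right (fun u => u * (g u - c) - s * (g u - c)),
          zero_add, add_comm T s]
    _ = (∫ u in s..s + T, u * (g u - c)) - s * ∫ u in s..s + T, (g u - c) := by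
        rw [intervalIntegral.integral_sub (hint _ (by fun_prop)) (hint _ (by fun_prop)),
          intervalIntegral.integral_const_mul]
    _ = ∫ u in s..s + T, u * (g u - c) := by
        rw [hg.intervalIntegral_sub_mean_eq_zero hcont hT, mul_zero, sub_zero]

theorem hasDerivAt_intervalIntegral_mul_comp_add_sub_mean (hg : Periodic g T)
    (hcont : Continuous g) (hT : T ≠ 0) (s : ℝ) :
    let c := (1 / T) * ∫ t in (0 : ℝ)..T, g t
    HasDerivAt (fun σ => (1 / T) * ∫ t in (0 : ℝ)..T, t * (g (t + σ) - c)) (g s - c) s := by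
  intro c
  set φ : ℝ → ℝ := fun u => u * (g u - c)
  have hφ : Continuous φ := by fun_prop
  have hprim : ∀ σ, HasDerivAt (fun τ => ∫ u in (0 : ℝ)..τ, φ u) (φ σ) σ :=
    fun σ => (hφ.integral_hasStrictDerivAt 0 σ).hasDerivAt
  have hwindow : (fun σ => (1 / T) * ∫ t in (0 : ℝ)..T, t * (g (t + σ) - c))
      = fun σ => (1 / T) * ((∫ u in (0 : ℝ)..σ + T, φ u) - ∫ u in (0 : ℝ)..σ, φ u) := by
    ext σ
    rw [hg.intervalIntegral_mul_comp_add_sub_mean hcont hT σ,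
      intervalIntegral.integral_interval_sub_left (hφ.intervalIntegrable _ _)
        (hφ.intervalIntegrable _ _)]
  rw [hwindow]
  refine ((((hprim (s + T)).comp_add_const s T).sub (hprim s)).const_mul (1 / T)).congr_deriv ?_
  simp only [φ, hg s]
  field_simp
  ring

end Function.Periodic

section Flow

variable {n : ℕ} {ω : Fin n → ℝ} {T : ℝ}

lemma ThetaPeriodic.periodic_along_flow {F : Type*} {f : (Fin n → ℝ) × (Fin n → ℝ) → F}
    (hper : ThetaPeriodic f) (hZ : ∀ i, ∃ z : ℤ, T * ω i = z) (x : (Fin n → ℝ) × (Fin n → ℝ)) :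
    Function.Periodic (fun t : ℝ => f (x.1 + t • ω, x.2)) T := by
  choose m hm using hZ
  intro t
  have hshift : (x.1 + (t + T) • ω, x.2) = ((x.1 + t • ω) + fun i => (m i : ℝ), x.2) := by
    ext i <;> simp [add_mul, ← hm i, add_assoc]
  simpa [hshift] using hper (x.1 + t • ω, x.2) m

lemma ContinuousOn.continuous_along_flow {ρ : ℝ} {f : (Fin n → ℝ) × (Fin n → ℝ) → ℝ}
    (hf : ContinuousOn f (Dom n ρ)) {x : (Fin n → ℝ) × (Fin n → ℝ)} (hx : x ∈ Dom n ρ) :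
    Continuous (fun t : ℝ => f (x.1 + t • ω, x.2)) :=
  hf.comp_continuous (by fun_prop) fun _ => ⟨mem_univ _, hx.2⟩

lemma flow_add (x : (Fin n → ℝ) × (Fin n → ℝ)) (s t : ℝ) :
    ((x.1 + s • ω) + t • ω, x.2) = (x.1 + (t + s) • ω, x.2) := by
  rw [add_smul, add_assoc, add_comm (t • ω)]

variable {f : (Fin n → ℝ) × (Fin n → ℝ) → ℝ}

lemma timeAverage_along_flow (hper : ThetaPeriodic f) (hZ : ∀ i, ∃ z : ℤ, T * ω i = z)
    (x : (Fin n → ℝ) × (Fin n → ℝ)) (s : ℝ) :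
    timeAverage ω T f (x.1 + s • ω, x.2) = timeAverage ω T f x := by
  simp only [timeAverage, flow_add]
  rw [(hper.periodic_along_flow hZ x).intervalIntegral_comp_add_right_eq s]

lemma averagingGenerator_along_flow (hper : ThetaPeriodic f) (hZ : ∀ i, ∃ z : ℤ, T * ω i = z)
    (x : (Fin n → ℝ) × (Fin n → ℝ)) (s : ℝ) :
    averagingGenerator ω T f (x.1 + s • ω, x.2) = (1 / T) * ∫ t in (0 : ℝ)..T,
      t * (f (x.1 + (t + s) • ω, x.2) - timeAverage ω T f x) := by
  simp only [averagingGenerator, flow_add, timeAverage_along_flow hper hZ]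

end Flow

theorem homological_equation_general (n k : ℕ) (ρ : ℝ)
    (ω : Fin n → ℝ) (T : ℝ) (hω : IsPeriodicVec ω T)
    (f : ((Fin n → ℝ) × (Fin n → ℝ)) → ℝ)
    (hper : ThetaPeriodic f) (hf : ContDiffOn ℝ k f (Dom n ρ)) :
    ∀ x ∈ Dom n ρ,
      HasDerivAt (fun s : ℝ => averagingGenerator ω T f (x.1 + s • ω, x.2))
        (f x - timeAverage ω T f x) 0 := by
  intro x hx
  obtain ⟨hT, -, hZ, -⟩ := hω
  have hderiv := (hper.periodic_along_flow hZ x).hasDerivAt_intervalIntegral_mul_comp_add_sub_mean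
    (hf.continuousOn.continuous_along_flow hx) hT.ne' 0
  simp only [zero_smul, add_zero] at hderiv
  rw [funext (averagingGenerator_along_flow hper hZ x)]
  exact hderiv

/-- homological equation for periodic frequencies: if `ω` is `T`-periodic,
`f ∈ C^k` (`k ≥ 1`) on `T^n × B_ρ`, `[f]` its `T`-average and
`χ = (1/T)∫_0^T t (f − [f]) ∘ Φ_t^l dt`, then `{χ, l} = ∂_θ χ · ω = f − [f]`,
where `{χ, l}` is computed as `d/ds (χ ∘ Φ_s^l)|_{s=0}`. No small divisors occur. -/
theorem homological_equation (n k : ℕ) (hk : 1 ≤ k) (ρ : ℝ) (hρ : 0 < ρ)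
    (ω : Fin n → ℝ) (T : ℝ) (hω : IsPeriodicVec ω T)
    (f : ((Fin n → ℝ) × (Fin n → ℝ)) → ℝ)
    (hper : ThetaPeriodic f) (hf : ContDiffOn ℝ k f (Dom n ρ)) :
    ∀ x ∈ Dom n ρ,
      HasDerivAt (fun s : ℝ => averagingGenerator ω T f (x.1 + s • ω, x.2))
        (f x - timeAverage ω T f x) 0 :=
  homological_equation_general n k ρ ω T hω f hper hf
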